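/- Let X_opt ∈ 𝕆^{n×k} be a global maximizer of f_θ over 𝕆^{n×k}. Then X_optᵀD is symmetric positive semidefinite. -/

import Mathlib

/-!
Right multiplication by an orthogonal `Q` keeps `X` on the Stiefel manifold and leaves
`tr(XᵀAX)` and `tr(XᵀBX)` unchanged; the latter is positive by the rank condition. Hence at a
maximizer `M = X_optᵀD` satisfies `tr(QᵀM) ≤ tr M` for every orthogonal `Q`. Plane rotations
then force `M` to be symmetric, and Householder reflections `1 - 2xxᵀ/(xᵀx)` force
`xᵀMx ≥ 0`.
-/

open Matrix

noncomputable section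

def fTheta {n k : ℕ} (A B : Matrix (Fin n) (Fin n) ℝ) (D : Matrix (Fin n) (Fin k) ℝ)
    (θ : ℝ) (X : Matrix (Fin n) (Fin k) ℝ) : ℝ :=
  (trace (Xᵀ * A * X) + trace (Xᵀ * D)) / trace (Xᵀ * B * X) ^ θ

end

lemma eq_zero_of_forall_sq_add_sq_eq_one {a b : ℝ}
    (h : ∀ c s : ℝ, c ^ 2 + s ^ 2 = 1 → a * c + b * s ≤ a) : b = 0 := by
  -- the rational parametrisation of the circle turns `h` into `a t² - b t ≥ 0` for all `t`
  have hquad : ∀ t : ℝ, 0 ≤ a * (t * t) + (-b) * t + 0 := by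
    intro t
    have := h ((1 - t ^ 2) / (1 + t ^ 2)) (2 * t / (1 + t ^ 2)) (by field_simp; ring)
    field_simp at this
    nlinarith
  have := discrim_le_zero hquad
  rw [discrim] at this
  nlinarith [sq_nonneg b]

namespace Matrix

variable {k R : Type*} [DecidableEq k]

section planeRotation

variable [CommRing R] {i j : k}

def planeRotation (i j : k) (c s : R) : Matrix k k R :=
  1 + (c - 1) • (single i i 1 + single j j 1) + s • (single i j 1 - single j i 1)

lemma transpose_planeRotation (i j : k) (c s : R) :
    (planeRotation i j c s)ᵀ = planeRotation i j c (-s) := by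
  simp only [planeRotation, transpose_add, transpose_smul, transpose_sub, transpose_one,
    transpose_single, neg_smul, smul_sub]
  abel

lemma planeRotation_mul_planeRotation_neg [Fintype k] (hij : i ≠ j) {c s : R}
    (hcs : c ^ 2 + s ^ 2 = 1) :
    planeRotation i j c (-s) * planeRotation i j c s = 1 := by
  rw [planeRotation, planeRotation]
  set P : Matrix k k R := single i i 1 + single j j 1
  set J : Matrix k k R := single i j 1 - single j i 1
  have hPP : P * P = P := by simp [P, mul_add, add_mul, hij, hij.symm]
  have hPJ : P * J = J := by simp [P, J, mul_sub, add_mul, hij, hij.symm]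
  have hJP : J * P = J := by
    simp [P, J, sub_mul, mul_add, hij, hij.symm]
    abel
  have hJJ : J * J = -P := by
    simp [P, J, sub_mul, mul_sub, hij, hij.symm]
    abel
  calc (1 + (c - 1) • P + (-s) • J) * (1 + (c - 1) • P + s • J)
      = 1 + (c ^ 2 + s ^ 2 - 1) • P := by
        simp only [mul_add, add_mul, one_mul, mul_one, smul_mul_assoc,
          mul_smul_comm, hPP, hPJ, hJP, hJJ, smul_neg]
        module
    _ = 1 := by rw [hcs, sub_self, zero_smul, add_zero]

lemma transpose_planeRotation_mul_self [Fintype k] (hij : i ≠ j) {c s : R}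
    (hcs : c ^ 2 + s ^ 2 = 1) :
    (planeRotation i j c s)ᵀ * planeRotation i j c s = 1 := by
  rw [transpose_planeRotation, planeRotation_mul_planeRotation_neg hij hcs]

lemma trace_transpose_planeRotation_mul [Fintype k] (i j : k) (c s : R) (M : Matrix k k R) :
    trace ((planeRotation i j c s)ᵀ * M) =
      trace M + (c - 1) * (M i i + M j j) + s * (M i j - M j i) := by
  rw [transpose_planeRotation]
  simp only [planeRotation, add_mul, sub_mul, one_mul, smul_mul_assoc,
    trace_add, trace_sub, trace_smul, trace_single_mul, smul_eq_mul, one_mul]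
  ring

end planeRotation

section householder

variable [Field R] [Fintype k]

def householder (x : k → R) : Matrix k k R :=
  1 - (2 / (x ⬝ᵥ x)) • vecMulVec x x

lemma transpose_householder (x : k → R) : (householder x)ᵀ = householder x := by
  simp [householder, transpose_vecMulVec]

lemma householder_mul_self {x : k → R} (hx : x ⬝ᵥ x ≠ 0) :
    householder x * householder x = 1 := by
  rw [householder]
  set V := vecMulVec x x
  have hVV : V * V = (x ⬝ᵥ x) • V := by rw [vecMulVec_mul_vecMulVec, vecMulVec_smul]
  have hcoef : (2 / (x ⬝ᵥ x)) ^ 2 * (x ⬝ᵥ x) - 2 * (2 / (x ⬝ᵥ x)) = 0 := by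
    field_simp
    ring
  calc (1 - (2 / (x ⬝ᵥ x)) • V) * (1 - (2 / (x ⬝ᵥ x)) • V)
      = 1 + ((2 / (x ⬝ᵥ x)) ^ 2 * (x ⬝ᵥ x) - 2 * (2 / (x ⬝ᵥ x))) • V := by
        simp only [mul_sub, sub_mul, one_mul, mul_one, smul_mul_assoc, mul_smul_comm, hVV,
          smul_smul]
        module
    _ = 1 := by rw [hcoef, zero_smul, add_zero]

lemma trace_householder_mul (x : k → R) (M : Matrix k k R) :
    trace (householder x * M) = trace M - 2 / (x ⬝ᵥ x) * (x ⬝ᵥ M *ᵥ x) := by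
  rw [householder, sub_mul, one_mul, smul_mul_assoc, trace_sub, trace_smul, vecMulVec_mul,
    trace_vecMulVec, dotProduct_comm x (x ᵥ* M), ← dotProduct_mulVec, smul_eq_mul]

end householder

section orthogonalTraceTest

variable [Fintype k] {M : Matrix k k ℝ}

lemma isSymm_of_forall_trace_transpose_mul_le
    (h : ∀ Q : Matrix k k ℝ, Qᵀ * Q = 1 → trace (Qᵀ * M) ≤ trace M) : M.IsSymm := by
  refine IsSymm.ext fun i j => ?_
  rcases eq_or_ne i j with rfl | hij
  · rfl
  have hskew : M i j - M j i = 0 :=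
    eq_zero_of_forall_sq_add_sq_eq_one (a := M i i + M j j) fun c s hcs => by
      have := h _ (transpose_planeRotation_mul_self hij hcs)
      rw [trace_transpose_planeRotation_mul] at this
      linarith
  linarith

lemma dotProduct_mulVec_nonneg_of_forall_trace_transpose_mul_le
    (h : ∀ Q : Matrix k k ℝ, Qᵀ * Q = 1 → trace (Qᵀ * M) ≤ trace M) (x : k → ℝ) :
    0 ≤ x ⬝ᵥ M *ᵥ x := by
  rcases eq_or_ne x 0 with rfl | hx
  · simp
  have hxx : 0 < x ⬝ᵥ x :=
    (Finset.sum_nonneg fun i _ => mul_self_nonneg (x i)).lt_of_ne'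
      (dotProduct_self_eq_zero.not.mpr hx)
  have := h (householder x) (by rw [transpose_householder, householder_mul_self hxx.ne'])
  rw [transpose_householder, trace_householder_mul] at this
  exact nonneg_of_mul_nonneg_right (sub_le_self_iff _ |>.mp this) (div_pos two_pos hxx)

theorem posSemidef_of_forall_trace_transpose_mul_le
    (h : ∀ Q : Matrix k k ℝ, Qᵀ * Q = 1 → trace (Qᵀ * M) ≤ trace M) : M.PosSemidef :=
  .of_dotProduct_mulVec_nonneg
    (isHermitian_iff_isSymm.mpr (isSymm_of_forall_trace_transpose_mul_le h))
    fun x => dotProduct_mulVec_nonneg_of_forall_trace_transpose_mul_le h (star x)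

end orthogonalTraceTest

section stiefel

variable {m n : Type*} [Fintype m] [Fintype n]

open scoped ComplexOrder MatrixOrder in
lemma PosSemidef.trace_conjTranspose_mul_mul_eq_zero_iff {𝕜 : Type*} [RCLike 𝕜]
    {B : Matrix m m 𝕜} (hB : B.PosSemidef) (X : Matrix m n 𝕜) :
    trace (Xᴴ * B * X) = 0 ↔ B * X = 0 := by
  classical
  obtain ⟨C, rfl⟩ := CStarAlgebra.nonneg_iff_eq_star_mul_self.mp hB.nonneg
  rw [star_eq_conjTranspose, conjTranspose_mul_self_mul_eq_zero,
    ← trace_conjTranspose_mul_self_eq_zero_iff, conjTranspose_mul, Matrix.mul_assoc,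
    Matrix.mul_assoc, Matrix.mul_assoc]

lemma trace_transpose_mul_mul_pos [DecidableEq n] {B : Matrix m m ℝ} (hB : B.PosSemidef)
    {X : Matrix m n ℝ} (hX : Xᵀ * X = 1)
    (hrank : Fintype.card m - Fintype.card n < B.rank) : 0 < trace (Xᵀ * B * X) := by
  have hXrank : Fintype.card n ≤ X.rank := by
    simpa [hX, rank_one] using rank_mul_le_right Xᵀ X
  rw [← conjTranspose_eq_transpose_of_trivial]
  refine (hB.conjTranspose_mul_mul_same X).trace_nonneg.lt_of_ne' fun h0 => ?_
  have := rank_add_rank_le_card_of_mul_eq_zero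
    ((hB.trace_conjTranspose_mul_mul_eq_zero_iff X).mp h0)
  omega

lemma trace_transpose_mul_mul_orthogonal [DecidableEq n] [CommRing R] {Q : Matrix n n R}
    (hQ : Q * Qᵀ = 1) (X : Matrix m n R) (M : Matrix m m R) :
    trace ((X * Q)ᵀ * M * (X * Q)) = trace (Xᵀ * M * X) := by
  rw [transpose_mul, show Qᵀ * Xᵀ * M * (X * Q) = Qᵀ * (Xᵀ * M * X) * Q by
    simp only [Matrix.mul_assoc], trace_mul_cycle, hQ, Matrix.one_mul]

end stiefel

end Matrix

theorem stmt5_general {n k : ℕ}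
    (A B : Matrix (Fin n) (Fin n) ℝ) (hB : B.PosSemidef)
    (hrank : n - k < B.rank)
    (D : Matrix (Fin n) (Fin k) ℝ) (θ : ℝ)
    (Xopt : Matrix (Fin n) (Fin k) ℝ) (hXopt : Xoptᵀ * Xopt = 1)
    (hmax : ∀ Y : Matrix (Fin n) (Fin k) ℝ, Yᵀ * Y = 1 →
      fTheta A B D θ Y ≤ fTheta A B D θ Xopt) :
    (Xoptᵀ * D).PosSemidef := by
  have hden : 0 < trace (Xoptᵀ * B * Xopt) ^ θ :=
    Real.rpow_pos_of_pos (trace_transpose_mul_mul_pos hB hXopt (by simpa using hrank)) θ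
  refine posSemidef_of_forall_trace_transpose_mul_le fun Q hQ => ?_
  have hQ' : Q * Qᵀ = 1 := mul_eq_one_comm.mp hQ
  have hstiefel : (Xopt * Q)ᵀ * (Xopt * Q) = 1 := by
    rw [transpose_mul, Matrix.mul_assoc, ← Matrix.mul_assoc Xoptᵀ, hXopt, Matrix.one_mul, hQ]
  have := hmax (Xopt * Q) hstiefel
  rw [fTheta, fTheta, trace_transpose_mul_mul_orthogonal hQ',
    trace_transpose_mul_mul_orthogonal hQ', transpose_mul, Matrix.mul_assoc Qᵀ,
    div_le_div_iff_of_pos_right hden] at this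
  linarith

/-- Theorem 2.8(a): if `X_opt` is a global maximizer of `f_θ` over the Stiefel manifold,
then `X_optᵀD` is symmetric positive semidefinite. -/
theorem stmt5 {n k : ℕ} (hk : 1 ≤ k) (hkn : k < n)
    (A B : Matrix (Fin n) (Fin n) ℝ) (hA : A.IsSymm) (hB : B.PosSemidef)
    (hrank : n - k < B.rank)
    (D : Matrix (Fin n) (Fin k) ℝ) (θ : ℝ) (hθ0 : 0 ≤ θ) (hθ1 : θ ≤ 1)
    (Xopt : Matrix (Fin n) (Fin k) ℝ) (hXopt : Xoptᵀ * Xopt = 1)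
    (hmax : ∀ Y : Matrix (Fin n) (Fin k) ℝ, Yᵀ * Y = 1 →
      fTheta A B D θ Y ≤ fTheta A B D θ Xopt) :
    (Xoptᵀ * D).PosSemidef :=
  stmt5_general A B hB hrank D θ Xopt hXopt hmax
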